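/- arXiv:2002.10942 — 3 statements merged into one kernel-verified Lean document; each statement's English description precedes it below -/
import Mathlib

section
/- For nonnegative integers α and i with 0 ≤ i ≤ α+1, the coefficient of x^(3α+4-3i) y^(3i) in the polynomial (x^4 + 8xy^3)(x^3 - y^3)^α, which equals (-1)^i (C(α,i) - 8·C(α,i-1)), is zero if and only if α = 9i - 1. -/
/-- The coefficient of `x^(3α+4-3i) y^(3i)` in `(x^4+8xy^3)(x^3-y^3)^α`, up to sign,
is `C(α,i) - 8·C(α,i-1)` (with the convention `C(α,-1) = 0`). It vanishes iff `α = 9i-1`. -/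
theorem stmt0 (α i : ℕ) (hi : i ≤ α + 1) :
    ((α.choose i : ℤ) - 8 * (if 1 ≤ i then (α.choose (i - 1) : ℤ) else 0)) = 0 ↔
      α + 1 = 9 * i := by
  rcases Nat.eq_zero_or_pos i with rfl | hpos
  · simp
  obtain ⟨k, rfl⟩ : ∃ k, i = k + 1 := ⟨i - 1, (Nat.succ_pred_eq_of_pos hpos).symm⟩
  have hk : k ≤ α := Nat.succ_le_succ_iff.mp hi
  simp only [le_add_iff_nonneg_left, zero_le, if_true, Nat.add_sub_cancel]
  have hid : (α.choose (k+1) : ℤ) * (k+1) = (α.choose k : ℤ) * ((α:ℤ) - k) := by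
    have h := Nat.choose_succ_right_eq α k
    zify [hk] at h
    exact h
  have hD : (0:ℤ) < (α.choose k : ℤ) := by exact_mod_cast Nat.choose_pos hk
  constructor
  · intro h
    have h8 : (α.choose (k+1):ℤ) = 8 * (α.choose k : ℤ) := by linarith
    rw [h8] at hid
    have hc : ((α:ℤ) - k) = 8 * (k+1) := by
      have := mul_left_cancel₀ hD.ne' (by linarith : (α.choose k : ℤ) * (8*(k+1)) = (α.choose k : ℤ) * ((α:ℤ) - k))
      linarith
    have : (α:ℤ) = 9*k + 8 := by linarith
    have : α = 9*k + 8 := by exact_mod_cast this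
    omega
  · intro h
    have hα : (α:ℤ) = 9*k + 8 := by exact_mod_cast congrArg (Nat.cast (R := ℤ)) (by omega : α = 9*k+8)
    rw [hα] at hid
    have hc : (α.choose (k+1):ℤ) * (k+1) = 8 * (α.choose k : ℤ) * (k+1) := by ring_nf; ring_nf at hid; linarith
    have hk1 : ((k:ℤ)+1) ≠ 0 := by positivity
    have := mul_right_cancel₀ hk1 hc
    linarith
end

section
/- Let α and i be nonnegative integers with 0 ≤ i ≤ α+2. If C(α,i) - 6·C(α,i-1) + 9·C(α,i-2) = 0, then 48α + 112 is a perfect square. -/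
/-- For `0 ≤ i ≤ α+2`, if `C(α,i) - 6·C(α,i-1) + 9·C(α,i-2) = 0`
(with the convention `C(α,k)=0` for `k<0`), then `48α+112` is a perfect square. -/
theorem stmt5 (α i : ℕ) (hi : i ≤ α + 2)
    (h : (α.choose i : ℤ) - 6 * (if 1 ≤ i then (α.choose (i - 1) : ℤ) else 0)
        + 9 * (if 2 ≤ i then (α.choose (i - 2) : ℤ) else 0) = 0) :
    ∃ n : ℕ, 48 * α + 112 = n ^ 2 := by
  rcases Nat.lt_or_ge i 2 with h2 | h2
  · interval_cases i
    · simp at h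
    · simp [Nat.choose_one_right] at h
      have hα : α = 6 := by
        have : (α : ℤ) = 6 := by linarith
        exact_mod_cast this
      exact ⟨20, by omega⟩
  · rcases Nat.lt_or_ge α i with hgt | hle
    · -- i = α+1 or i = α+2
      rw [if_pos (by omega), if_pos h2] at h
      rcases (by omega : i = α + 1 ∨ i = α + 2) with rfl | rfl
      · -- i = α + 1
        have hα : 1 ≤ α := by omega
        have e1 : α + 1 - 1 = α := by omega
        have e2 : α + 1 - 2 = α - 1 := by omega
        have hc : α.choose (α - 1) = α := by
          rw [Nat.choose_symm (by omega), Nat.choose_one_right]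
        rw [e1, e2, Nat.choose_self, hc, Nat.choose_succ_self] at h
        push_cast at h
        omega
      · -- i = α + 2
        have e1 : α + 2 - 1 = α + 1 := by omega
        have e2 : α + 2 - 2 = α := by omega
        rw [e1, e2, Nat.choose_self, Nat.choose_succ_self,
          Nat.choose_eq_zero_of_lt (by omega : α < α + 2)] at h
        norm_num at h
    · -- main case: 2 ≤ i ≤ α
      rw [if_pos (by omega), if_pos h2] at h
      have e1 := Nat.choose_succ_right_eq α (i - 1)
      rw [show i - 1 + 1 = i from by omega] at e1
      have e2 := Nat.choose_succ_right_eq α (i - 2)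
      rw [show i - 2 + 1 = i - 1 from by omega] at e2
      have h1 : (α.choose i : ℤ) * i = (α.choose (i-1) : ℤ) * ((α:ℤ) - i + 1) := by
        have := congrArg (Nat.cast : ℕ → ℤ) e1
        push_cast at this
        rw [this]
        have : ((α - (i-1) : ℕ) : ℤ) = (α:ℤ) - i + 1 := by omega
        rw [this]
      have hrel2 : (α.choose (i-1) : ℤ) * ((i:ℤ) - 1) = (α.choose (i-2) : ℤ) * ((α:ℤ) - i + 2) := by
        have := congrArg (Nat.cast : ℕ → ℤ) e2
        push_cast at this
        have c1 : ((i - 1 : ℕ) : ℤ) = (i:ℤ) - 1 := by omega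
        have c2 : ((α - (i-2) : ℕ) : ℤ) = (α:ℤ) - i + 2 := by omega
        rw [c1, c2] at this
        exact this
      have hpos : (0:ℤ) < (α.choose i : ℤ) := by
        exact_mod_cast Nat.choose_pos hle
      have hz : (α.choose i : ℤ) *
          (((α:ℤ)-i+1)*((α:ℤ)-i+2) - 6*(i:ℤ)*((α:ℤ)-i+2) + 9*(i:ℤ)*((i:ℤ)-1)) = 0 := by
        linear_combination (((α:ℤ)-i+1)*((α:ℤ)-i+2)) * h
          + (-6*((α:ℤ)-i+2) + 9*((i:ℤ)-1)) * h1 + 9*((α:ℤ)-i+1) * hrel2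
      have hB : ((α:ℤ)-i+1)*((α:ℤ)-i+2) - 6*(i:ℤ)*((α:ℤ)-i+2) + 9*(i:ℤ)*((i:ℤ)-1) = 0 := by
        rcases mul_eq_zero.mp hz with h' | h'
        · exact absurd h' hpos.ne'
        · exact h'
      refine ⟨4 * (4*(i:ℤ) - α - 3).natAbs, ?_⟩
      have key : ((48 * α + 112 : ℕ) : ℤ) = ((4 * (4*(i:ℤ) - α - 3).natAbs : ℕ) : ℤ)^2 := by
        push_cast
        rw [mul_pow, sq_abs]
        nlinarith [hB]
      exact_mod_cast key
end

section
/- For m = 11: the quantities (2m-1)(2m-2)(2m-3)/((6m-1)(6m-2)(6m-3))·(1/3)·C(3m,m) and (2m-1)(2m-2)(2m-3)(2m-4)/((6m-1)(6m-2)(6m-3)(6m-4))·(1/3)·C(3m,m) are positive integers, but (2m-1)(2m-2)(2m-3)(2m-4)(2m-5)/((6m-1)(6m-2)(6m-3)(6m-4)(6m-5))·(1/3)·C(3m,m) is not an integer. -/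
/-- The rational number `q` is a positive integer. -/
def IsPosInt (q : ℚ) : Prop := ∃ n : ℕ, 0 < n ∧ (n : ℚ) = q

lemma choose33 : (33).choose 11 = 193536720 := by rfl

/-- For `m = 11`: `λ₆ = (2m-1)(2m-2)(2m-3)/((6m-1)(6m-2)(6m-3))·(1/3)·C(3m,m)` and
`λ₇ = (2m-1)(2m-2)(2m-3)(2m-4)/((6m-1)(6m-2)(6m-3)(6m-4))·(1/3)·C(3m,m)` are positive
integers, but `λ₈ = (2m-1)(2m-2)(2m-3)(2m-4)(2m-5)/((6m-1)(6m-2)(6m-3)(6m-4)(6m-5))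
·(1/3)·C(3m,m)` is not an integer. -/
theorem stmt18 (m : ℕ) (hm : m = 11) :
    IsPosInt ((2 * (m : ℚ) - 1) * (2 * m - 2) * (2 * m - 3)
        / ((6 * m - 1) * (6 * m - 2) * (6 * m - 3)) * (1 / 3) * ((3 * m).choose m : ℚ)) ∧
      IsPosInt ((2 * (m : ℚ) - 1) * (2 * m - 2) * (2 * m - 3) * (2 * m - 4)
        / ((6 * m - 1) * (6 * m - 2) * (6 * m - 3) * (6 * m - 4)) * (1 / 3)
        * ((3 * m).choose m : ℚ)) ∧
      ¬ ∃ n : ℤ, (n : ℚ) = (2 * (m : ℚ) - 1) * (2 * m - 2) * (2 * m - 3) * (2 * m - 4)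
        * (2 * m - 5)
        / ((6 * m - 1) * (6 * m - 2) * (6 * m - 3) * (6 * m - 4) * (6 * m - 5)) * (1 / 3)
        * ((3 * m).choose m : ℚ) := by
  subst hm
  norm_num [choose33, IsPosInt]
  refine ⟨⟨1964315, by norm_num⟩, ⟨570285, by norm_num⟩, fun n hn => ?_⟩
  have h61 : (61 : ℚ) * n = 9694845 := by rw [hn]; norm_num
  have : (61 : ℤ) * n = 9694845 := by exact_mod_cast h61
  omega
end
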